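/- arXiv:2211.14967 — 5 statements merged into one kernel-verified Lean document; each statement's English description precedes it below -/
import Mathlib

section
/- If q ∈ k× is not a root of unity, then the quantum torus O_q((k×)^2) = k⟨x^{±1}, y^{±1} | xy = qyx⟩ is a simple ring: its only two-sided ideals are 0 and the whole ring. -/
/-!
The monomials `y ^ j * x ^ i` are units spanning the torus, and they are simultaneous
eigenvectors for conjugation: `x` scales `y ^ j * x ^ i` by `q ^ j`, and `y` scales it by
`q ^ (-i)`. Since `q` is not a root of unity, these eigenvalues separate any two monomials.
Write a nonzero element of an ideal as a combination of monomials; conjugating it by `x` or `y`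
and subtracting a suitable multiple of it gives an element of the ideal which is a combination
with fewer, but still some, nonzero coefficients. Iterating, the ideal contains a nonzero multiple
of a single monomial, which is a unit. Linear independence of the monomials is never needed.
-/

open FreeAlgebra in
/-- Defining relations of the rank-two quantum torus `k⟨x^{±1}, y^{±1} | xy = qyx⟩`:
generator `0` is `x`, `1` is `x⁻¹`, `2` is `y`, `3` is `y⁻¹`. -/
inductive QTorusRel (k : Type*) [CommRing k] (q : k) :
    FreeAlgebra k (Fin 4) → FreeAlgebra k (Fin 4) → Prop
  | xinv : QTorusRel k q (ι k (0 : Fin 4) * ι k (1 : Fin 4)) 1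
  | invx : QTorusRel k q (ι k (1 : Fin 4) * ι k (0 : Fin 4)) 1
  | yinv : QTorusRel k q (ι k (2 : Fin 4) * ι k (3 : Fin 4)) 1
  | invy : QTorusRel k q (ι k (3 : Fin 4) * ι k (2 : Fin 4)) 1
  | qcomm : QTorusRel k q (ι k (0 : Fin 4) * ι k (2 : Fin 4))
      (algebraMap k _ q * (ι k (2 : Fin 4) * ι k (0 : Fin 4)))

/-- The rank-two quantum torus `O_q((k×)²)`. -/
abbrev QuantumTorus (k : Type*) [CommRing k] (q : k) := RingQuot (QTorusRel k q)

section Group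
variable {G : Type*} [Group G] {a b z : G}

theorem SemiconjBy.zpow_right_of_mem_center (hz : z ∈ Subgroup.center G)
    (h : SemiconjBy a b (z * b)) (n : ℤ) : SemiconjBy a (b ^ n) (z ^ n * b ^ n) := by
  simpa only [Commute.mul_zpow (Subgroup.mem_center_iff.mp hz b).symm] using h.zpow_right n

theorem zpow_mul_zpow_of_mul_eq (hz : z ∈ Subgroup.center G) (h : a * b = z * b * a)
    (m n : ℤ) : a ^ m * b ^ n = z ^ (m * n) * b ^ n * a ^ m := by
  have hb : SemiconjBy a (b ^ n) (z ^ n * b ^ n) := SemiconjBy.zpow_right_of_mem_center hz h n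
  have ha : SemiconjBy (b ^ n) a ((z ^ n)⁻¹ * a) := by
    rw [SemiconjBy, mul_assoc, hb.eq]
    group
  have ha' := (ha.zpow_right_of_mem_center (inv_mem (zpow_mem hz n)) m).eq
  rw [mul_assoc, ha', ← mul_assoc, ← mul_assoc, ← zpow_neg, ← zpow_mul, ← zpow_add,
    show m * n + -n * m = 0 by ring, zpow_zero, one_mul]

def laurentMonomial (a b : G) (p : ℤ × ℤ) : G := b ^ p.2 * a ^ p.1

theorem laurentMonomial_mul_laurentMonomial (hz : z ∈ Subgroup.center G)
    (h : a * b = z * b * a) (p p' : ℤ × ℤ) :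
    laurentMonomial a b p * laurentMonomial a b p' =
      z ^ (p.1 * p'.2) * laurentMonomial a b (p + p') := by
  have hzb : b ^ p.2 * z ^ (p.1 * p'.2) = z ^ (p.1 * p'.2) * b ^ p.2 :=
    Subgroup.mem_center_iff.mp (zpow_mem hz _) _
  calc laurentMonomial a b p * laurentMonomial a b p'
      = b ^ p.2 * (a ^ p.1 * b ^ p'.2) * a ^ p'.1 := by simp only [laurentMonomial]; group
    _ = b ^ p.2 * z ^ (p.1 * p'.2) * b ^ p'.2 * a ^ p.1 * a ^ p'.1 := by
        rw [zpow_mul_zpow_of_mul_eq hz h]; group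
    _ = z ^ (p.1 * p'.2) * laurentMonomial a b (p + p') := by
        rw [hzb, laurentMonomial, Prod.fst_add, Prod.snd_add]; group

theorem mul_laurentMonomial_mul_inv_left (hz : z ∈ Subgroup.center G) (h : a * b = z * b * a)
    (p : ℤ × ℤ) : a * laurentMonomial a b p * a⁻¹ = z ^ p.2 * laurentMonomial a b p := by
  have hab := zpow_mul_zpow_of_mul_eq hz h 1 p.2
  rw [zpow_one, one_mul] at hab
  rw [laurentMonomial, ← mul_assoc, hab]
  group

theorem mul_laurentMonomial_mul_inv_right (hz : z ∈ Subgroup.center G) (h : a * b = z * b * a)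
    (p : ℤ × ℤ) : b * laurentMonomial a b p * b⁻¹ = z ^ (-p.1) * laurentMonomial a b p := by
  have hzb : b ^ (p.2 + 1) * z ^ (-p.1) = z ^ (-p.1) * b ^ (p.2 + 1) :=
    Subgroup.mem_center_iff.mp (zpow_mem hz _) _
  calc b * laurentMonomial a b p * b⁻¹ = b ^ (p.2 + 1) * (a ^ p.1 * b ^ (-1 : ℤ)) := by
        rw [laurentMonomial]; group
    _ = z ^ (-p.1) * laurentMonomial a b p := by
        rw [zpow_mul_zpow_of_mul_eq hz h, mul_neg_one, ← mul_assoc, ← mul_assoc, hzb,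
          laurentMonomial]
        group

end Group

section AlgebraUnits
variable {k A : Type*} [CommSemiring k] [Semiring A] [Algebra k A]

theorem Units.map_algebraMap_mem_center (c : kˣ) :
    Units.map (algebraMap k A : k →* A) c ∈ Subgroup.center Aˣ :=
  Subgroup.mem_center_iff.mpr fun g => Units.ext (Algebra.commutes (c : k) (g : A)).symm

theorem Units.val_map_algebraMap_mul (c : kˣ) (w : Aˣ) :
    ((Units.map (algebraMap k A : k →* A) c * w : Aˣ) : A) = (c : k) • (w : A) := by
  simp [Algebra.smul_def]

variable {u v : Aˣ} {c : kˣ}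

theorem Units.mul_eq_map_algebraMap_mul (h : (u * v : A) = (c : k) • (v * u : A)) :
    u * v = Units.map (algebraMap k A : k →* A) c * v * u :=
  Units.ext <| by rw [mul_assoc, Units.val_map_algebraMap_mul]; exact h

theorem span_laurentMonomial_eq_top (h : (u * v : A) = (c : k) • (v * u : A))
    (hgen : Algebra.adjoin k {(u : A), ↑u⁻¹, ↑v, ↑v⁻¹} = ⊤) :
    Submodule.span k (Set.range fun p => ((laurentMonomial u v p : Aˣ) : A)) = ⊤ := by
  set V := Submodule.span k (Set.range fun p => ((laurentMonomial u v p : Aˣ) : A))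
  have hM (p : ℤ × ℤ) : ((laurentMonomial u v p : Aˣ) : A) ∈ V :=
    Submodule.subset_span ⟨p, rfl⟩
  have hmul : V * V ≤ V := by
    rw [Submodule.span_mul_span, Submodule.span_le]
    rintro _ ⟨_, ⟨p, rfl⟩, _, ⟨p', rfl⟩, rfl⟩
    simp only [← Units.val_mul, laurentMonomial_mul_laurentMonomial
      (Units.map_algebraMap_mem_center c) (Units.mul_eq_map_algebraMap_mul h), ← map_zpow,
      Units.val_map_algebraMap_mul]
    exact V.smul_mem _ (hM _)
  have hgens : {(u : A), ↑u⁻¹, ↑v, ↑v⁻¹} ⊆ (V : Set A) := by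
    rintro _ (rfl | rfl | rfl | rfl)
    · simpa [laurentMonomial] using hM (1, 0)
    · simpa [laurentMonomial] using hM (-1, 0)
    · simpa [laurentMonomial] using hM (0, 1)
    · simpa [laurentMonomial] using hM (0, -1)
  let S := V.toSubalgebra (by simpa [laurentMonomial] using hM 0)
    fun x y hx hy => hmul (Submodule.mul_mem_mul hx hy)
  have hS : (⊤ : Subalgebra k A) ≤ S := hgen ▸ Algebra.adjoin_le hgens
  exact eq_top_iff.mpr fun x _ => hS trivial

end AlgebraUnits

def SeparatedByConjugation (k : Type*) {A ι : Type*} [CommSemiring k] [Semiring A] [Algebra k A]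
    (M : ι → Aˣ) : Prop :=
  ∀ i j, i ≠ j → ∃ (g : Aˣ) (χ : ι → k),
    (∀ l, (g * M l * g⁻¹ : A) = χ l • (M l : A)) ∧ χ i ≠ χ j

namespace TwoSidedIdeal
variable {k A ι : Type*} [Field k] [Ring A] [Algebra k A]

theorem smul_mem {R : Type*} [CommSemiring R] [Algebra R A] (I : TwoSidedIdeal A) (c : R)
    {x : A} (hx : x ∈ I) : c • x ∈ I := by
  rw [Algebra.smul_def]
  exact I.mul_mem_left _ _ hx

theorem one_mem_of_sum_smul_mem {M : ι → Aˣ} (hsep : SeparatedByConjugation k M)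
    (I : TwoSidedIdeal A) (s : Finset ι) (hs : s.Nonempty) (a : ι → k)
    (ha : ∀ l ∈ s, a l ≠ 0) (hI : ∑ l ∈ s, a l • (M l : A) ∈ I) : (1 : A) ∈ I := by
  classical
  induction s using Finset.strongInduction generalizing a with | H s ih =>
  obtain ⟨i, rfl⟩ | ⟨i, hi, j, hj, hij⟩ := hs.exists_eq_singleton_or_nontrivial
  · rw [Finset.sum_singleton] at hI
    have := I.mul_mem_left (M i)⁻¹.val _ (I.smul_mem (a i)⁻¹ hI)
    rwa [smul_smul, inv_mul_cancel₀ (ha i (Finset.mem_singleton_self i)), one_smul,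
      Units.inv_mul] at this
  obtain ⟨g, χ, hχ, hne⟩ := hsep i j hij
  set x := ∑ l ∈ s, a l • (M l : A)
  -- Conjugating by `g` and subtracting `χ i • x` kills the term at `i` but not the one at `j`.
  have hconj : ∑ l ∈ s with χ l ≠ χ i, ((χ l - χ i) * a l) • (M l : A) =
      g * x * g⁻¹ - χ i • x := by
    rw [Finset.sum_filter_of_ne (p := fun l => χ l ≠ χ i)
      fun l _ h hl => h (by rw [hl, sub_self, zero_mul, zero_smul])]
    simp only [x, Finset.mul_sum, Finset.sum_mul, Finset.smul_sum, ← Finset.sum_sub_distrib,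
      mul_smul_comm, smul_mul_assoc, hχ, smul_smul, ← sub_smul, sub_mul]
    exact Finset.sum_congr rfl fun l _ => by rw [mul_comm (a l)]
  refine ih (s.filter fun l => χ l ≠ χ i) (Finset.filter_ssubset.mpr ⟨i, hi, by simp⟩)
    ⟨j, by simpa [hne.symm] using hj⟩ _
    (fun l hl => mul_ne_zero (sub_ne_zero.mpr (Finset.mem_filter.mp hl).2)
      (ha l (Finset.mem_filter.mp hl).1)) ?_
  rw [hconj]
  exact I.sub_mem (I.mul_mem_right _ _ (I.mul_mem_left _ _ hI)) (I.smul_mem _ hI)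

theorem eq_bot_or_eq_top_of_span_eq_top {M : ι → Aˣ}
    (hspan : Submodule.span k (Set.range fun i => (M i : A)) = ⊤)
    (hsep : SeparatedByConjugation k M) (I : TwoSidedIdeal A) : I = ⊥ ∨ I = ⊤ := by
  refine or_iff_not_imp_left.mpr fun hI => I.one_mem_iff.mp ?_
  obtain ⟨x, hxI, hx0⟩ : ∃ x ∈ I, x ≠ 0 := by
    by_contra! h
    exact hI (eq_bot_iff.mpr fun x hx => by simpa using h x hx)
  obtain ⟨c, rfl⟩ :=
    Finsupp.mem_span_range_iff_exists_finsupp.mp (hspan ▸ Submodule.mem_top (x := x))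
  refine one_mem_of_sum_smul_mem hsep I c.support ?_ c (fun l => Finsupp.mem_support_iff.mp) hxI
  exact Finset.nonempty_iff_ne_empty.mpr fun h => hx0 (by simp [Finsupp.sum, h])

theorem eq_bot_or_eq_top_of_mul_eq_smul {u v : Aˣ} {c : kˣ} (hc : ¬IsOfFinOrder c)
    (h : (u * v : A) = (c : k) • (v * u : A))
    (hgen : Algebra.adjoin k {(u : A), ↑u⁻¹, ↑v, ↑v⁻¹} = ⊤) (I : TwoSidedIdeal A) :
    I = ⊥ ∨ I = ⊤ := by
  have hz := Units.map_algebraMap_mem_center (A := A) c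
  have h' := Units.mul_eq_map_algebraMap_mul h
  have hinj : Function.Injective fun n : ℤ => ((c ^ n : kˣ) : k) :=
    Units.val_injective.comp (injective_zpow_iff_not_isOfFinOrder.mpr hc)
  refine eq_bot_or_eq_top_of_span_eq_top (span_laurentMonomial_eq_top h hgen)
    (fun p p' hpp' => ?_) I
  by_cases h1 : p.1 = p'.1
  · refine ⟨u, fun r => ((c ^ r.2 : kˣ) : k), fun r => ?_,
      fun he => hpp' (Prod.ext h1 (hinj he))⟩
    rw [← Units.val_mul, ← Units.val_mul, mul_laurentMonomial_mul_inv_left hz h', ← map_zpow,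
      Units.val_map_algebraMap_mul]
  · refine ⟨v, fun r => ((c ^ (-r.1) : kˣ) : k), fun r => ?_,
      fun he => h1 (neg_inj.mp (hinj he))⟩
    rw [← Units.val_mul, ← Units.val_mul, mul_laurentMonomial_mul_inv_right hz h', ← map_zpow,
      Units.val_map_algebraMap_mul]

end TwoSidedIdeal

namespace QuantumTorus
variable {k : Type*} [CommRing k] (q : k)

def gen (i : Fin 4) : QuantumTorus k q := RingQuot.mkAlgHom k (QTorusRel k q) (FreeAlgebra.ι k i)

theorem gen_mul_gen_of_rel {i j : Fin 4}
    (h : QTorusRel k q (FreeAlgebra.ι k i * FreeAlgebra.ι k j) 1) : gen q i * gen q j = 1 := by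
  rw [gen, gen, ← map_mul, RingQuot.mkAlgHom_rel k h, map_one]

def x : (QuantumTorus k q)ˣ :=
  ⟨gen q 0, gen q 1, gen_mul_gen_of_rel q .xinv, gen_mul_gen_of_rel q .invx⟩

def y : (QuantumTorus k q)ˣ :=
  ⟨gen q 2, gen q 3, gen_mul_gen_of_rel q .yinv, gen_mul_gen_of_rel q .invy⟩

theorem x_mul_y : (x q * y q : QuantumTorus k q) = q • (y q * x q : QuantumTorus k q) := by
  change gen q 0 * gen q 2 = q • (gen q 2 * gen q 0)
  rw [gen, gen, ← map_mul, RingQuot.mkAlgHom_rel k QTorusRel.qcomm, map_mul, map_mul,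
    AlgHom.commutes, Algebra.smul_def]

theorem adjoin_x_y :
    Algebra.adjoin k {(x q : QuantumTorus k q), ↑(x q)⁻¹, ↑(y q), ↑(y q)⁻¹} = ⊤ := by
  rw [eq_top_iff]
  rintro z -
  obtain ⟨w, rfl⟩ := RingQuot.mkAlgHom_surjective k (QTorusRel k q) z
  induction w using FreeAlgebra.induction with
  | grade0 r => rw [AlgHom.commutes]; exact Subalgebra.algebraMap_mem _ r
  | grade1 i =>
    refine Algebra.subset_adjoin ?_
    fin_cases i
    exacts [.inl rfl, .inr (.inl rfl), .inr (.inr (.inl rfl)), .inr (.inr (.inr rfl))]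
  | mul a b ha hb => rw [map_mul]; exact mul_mem ha hb
  | add a b ha hb => rw [map_add]; exact add_mem ha hb

end QuantumTorus

/-- If `q` is not a root of unity, the quantum torus `O_q((k×)²)` is a simple ring:
its only two-sided ideals are `0` and the whole ring. -/
theorem quantumTorus_simple {k : Type*} [Field k] (q : k) (hq0 : q ≠ 0)
    (hq : ∀ n : ℕ, 0 < n → q ^ n ≠ 1) (I : TwoSidedIdeal (QuantumTorus k q)) :
    I = ⊥ ∨ I = ⊤ := by
  have hfin : ¬IsOfFinOrder (Units.mk0 q hq0) := fun h => by
    obtain ⟨n, hn, hpow⟩ := isOfFinOrder_iff_pow_eq_one.mp h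
    exact hq n hn (by simpa [Units.ext_iff] using hpow)
  exact I.eq_bot_or_eq_top_of_mul_eq_smul hfin (QuantumTorus.x_mul_y q)
    (QuantumTorus.adjoin_x_y q)
end

section
/- Let R be a commutative Poisson algebra over a field of characteristic 0 and let I be a Poisson ideal of R. Then the radical √I of I is again a Poisson ideal. -/
/-! For `r : R` the map `{r, -}` is a derivation `D` with `D I ⊆ I`. If `aⁿ ∈ I`, then
`(D a)²ⁿ ∈ I`: applying `D` to `aᵐ⁺¹ (D a)ʲ ∈ I` and multiplying by `D a` gives
`(m + 1) aᵐ (D a)ʲ⁺²` modulo a multiple of `aᵐ⁺¹ (D a)ʲ`, so in characteristic zero each power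
of `a` can be traded for two powers of `D a`. -/

/-- An ideal `I` of a commutative algebra with a bracket `B` is a Poisson ideal if
`{R, I} ⊆ I`. -/
def IsPoissonIdeal {k R : Type*} [CommSemiring k] [CommRing R] [Algebra k R]
    (B : R →ₗ[k] R →ₗ[k] R) (I : Ideal R) : Prop :=
  ∀ r a : R, a ∈ I → B r a ∈ I

variable {k R : Type*} [Field k] [CommRing R] [Algebra k R]

theorem Ideal.mem_of_natCast_mul_mem [CharZero k] {I : Ideal R} {n : ℕ} (hn : n ≠ 0) {y : R}
    (h : (n : R) * y ∈ I) : y ∈ I := by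
  have hunit : IsUnit (n : R) := by
    simpa using (IsUnit.mk0 (n : k) (Nat.cast_ne_zero.mpr hn)).map (algebraMap k R)
  exact (I.unit_mul_mem_iff_mem hunit).mp h

namespace Derivation

variable (D : Derivation k R R)

theorem mul_map_pow_succ_mul_pow (a : R) (m j : ℕ) :
    D a * D (a ^ (m + 1) * D a ^ j) =
      (m + 1 : ℕ) * (a ^ m * D a ^ (j + 2)) + j * D (D a) * (a ^ (m + 1) * D a ^ j) := by
  rw [leibniz, leibniz_pow, leibniz_pow]
  cases j with
  | zero => simp only [smul_eq_mul]; push_cast; ring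
  | succ j => simp only [smul_eq_mul, Nat.add_sub_cancel]; push_cast; ring

variable [CharZero k] {I : Ideal R} (hD : ∀ x ∈ I, D x ∈ I)
include hD

theorem pow_mul_map_pow_add_two_mem {a : R} {m j : ℕ} (h : a ^ (m + 1) * D a ^ j ∈ I) :
    a ^ m * D a ^ (j + 2) ∈ I := by
  refine I.mem_of_natCast_mul_mem (k := k) (Nat.succ_ne_zero m) ?_
  have hsum := I.mul_mem_left (D a) (hD _ h)
  rw [mul_map_pow_succ_mul_pow] at hsum
  exact (I.add_mem_iff_left (I.mul_mem_left _ h)).mp hsum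

theorem pow_mul_map_pow_add_mem {a : R} {m n j : ℕ} (h : a ^ (m + n) * D a ^ j ∈ I) :
    a ^ m * D a ^ (j + 2 * n) ∈ I := by
  induction n generalizing j with
  | zero => exact h
  | succ n ih =>
    rw [show j + 2 * (n + 1) = j + 2 + 2 * n by ring]
    exact ih (D.pow_mul_map_pow_add_two_mem hD (by rwa [← add_assoc] at h))

theorem map_mem_radical {a : R} (ha : a ∈ I.radical) : D a ∈ I.radical := by
  obtain ⟨n, hn⟩ := ha
  exact ⟨2 * n, by simpa using D.pow_mul_map_pow_add_mem hD (m := 0) (j := 0) (by simpa)⟩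

end Derivation

theorem isPoissonIdeal_radical_general [CharZero k] (B : R →ₗ[k] R →ₗ[k] R)
    (hleib : ∀ a x y : R, B a (x * y) = B a x * y + x * B a y)
    {I : Ideal R} (hI : IsPoissonIdeal B I) :
    IsPoissonIdeal B I.radical := by
  intro r a ha
  let D : Derivation k R R :=
    Derivation.mk' (B r) fun x y => by rw [hleib, smul_eq_mul, smul_eq_mul]; ring
  exact D.map_mem_radical (hI r) ha

/-- In characteristic zero, the radical of a Poisson ideal is a Poisson ideal. -/
theorem isPoissonIdeal_radical [CharZero k] (B : R →ₗ[k] R →ₗ[k] R)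
    (hanti : ∀ a b : R, B a b = - B b a)
    (hjac : ∀ a b c : R, B a (B b c) + B b (B c a) + B c (B a b) = 0)
    (hleib : ∀ a x y : R, B a (x * y) = B a x * y + x * B a y)
    {I : Ideal R} (hI : IsPoissonIdeal B I) :
    IsPoissonIdeal B I.radical :=
  isPoissonIdeal_radical_general B hleib hI
end

section
/- Let k be an algebraically closed field of characteristic 2 and R = k[x,y] the polynomial ring with the Poisson bracket determined by {x,y} = xy. Then for every λ ∈ k×, the principal ideal ⟨x^2 + λ^2 y^2⟩ is a Poisson ideal of R that is Poisson-prime but not a prime ideal. -/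
open MvPolynomial

/-- The Poisson bracket on `k[x,y]` determined by `{x,y} = xy`:
`{f,g} = xy (∂f/∂x ∂g/∂y − ∂f/∂y ∂g/∂x)`. -/
noncomputable def xyBracket {k : Type*} [CommRing k]
    (f g : MvPolynomial (Fin 2) k) : MvPolynomial (Fin 2) k :=
  X 0 * X 1 * (pderiv 0 f * pderiv 1 g - pderiv 1 f * pderiv 0 g)

/-- Poisson ideals for the bracket `{x,y} = xy`. -/
def IsXYPoissonIdeal {k : Type*} [CommRing k] (I : Ideal (MvPolynomial (Fin 2) k)) : Prop :=
  ∀ r a : MvPolynomial (Fin 2) k, a ∈ I → xyBracket r a ∈ I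

/-!
In characteristic 2, `x² + c²y² = p²` with `p = x + cy`, which is prime (a linear change of
variables carries it to `x`). Squares are Poisson-central, so `⟨p²⟩` is a Poisson ideal, and it is
not prime. If `I * J ⊆ ⟨p²⟩` for Poisson ideals `I`, `J`, one of them, say `I`, lies in `⟨p⟩`; for
`p * t ∈ I` we get `{x, p * t} ≡ t * {x, p} = c x y t` modulo `p`, and `p ∤ c x y`, so `p ∣ t`.
-/

section

variable {R : Type*} [CommRing R]

theorem xyBracket_mul_right (r a b : MvPolynomial (Fin 2) R) :
    xyBracket r (a * b) = a * xyBracket r b + b * xyBracket r a := by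
  simp only [xyBracket, Derivation.leibniz, smul_eq_mul]
  ring

theorem xyBracket_sq [CharP R 2] (r a : MvPolynomial (Fin 2) R) : xyBracket r (a ^ 2) = 0 := by
  rw [sq, xyBracket_mul_right, CharTwo.add_self_eq_zero]

theorem isXYPoissonIdeal_span_sq [CharP R 2] (a : MvPolynomial (Fin 2) R) :
    IsXYPoissonIdeal (Ideal.span {a ^ 2}) := by
  intro r f hf
  obtain ⟨t, rfl⟩ := Ideal.mem_span_singleton.mp hf
  rw [xyBracket_mul_right, xyBracket_sq, mul_zero, add_zero]
  exact Ideal.mul_mem_right _ _ (Ideal.mem_span_singleton_self _)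

theorem IsXYPoissonIdeal.le_span_sq_of_le_span {p q : MvPolynomial (Fin 2) R} (hp : Prime p)
    (hpq : ¬ p ∣ xyBracket q p) {I : Ideal (MvPolynomial (Fin 2) R)} (hI : IsXYPoissonIdeal I)
    (hle : I ≤ Ideal.span {p}) : I ≤ Ideal.span {p ^ 2} := by
  intro f hf
  obtain ⟨t, rfl⟩ := Ideal.mem_span_singleton.mp (hle hf)
  have hdvd : p ∣ p * xyBracket q t + t * xyBracket q p := by
    rw [← xyBracket_mul_right]
    exact Ideal.mem_span_singleton.mp (hle (hI q _ hf))
  have hpt : p ∣ t :=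
    (hp.dvd_or_dvd ((dvd_add_right (dvd_mul_right _ _)).mp hdvd)).resolve_right hpq
  rw [Ideal.mem_span_singleton, sq]
  exact mul_dvd_mul_left p hpt

theorem IsXYPoissonIdeal.le_or_le_of_mul_le_span_sq {p q : MvPolynomial (Fin 2) R}
    (hp : Prime p) (hpq : ¬ p ∣ xyBracket q p) {I J : Ideal (MvPolynomial (Fin 2) R)}
    (hI : IsXYPoissonIdeal I) (hJ : IsXYPoissonIdeal J) (hIJ : I * J ≤ Ideal.span {p ^ 2}) :
    I ≤ Ideal.span {p ^ 2} ∨ J ≤ Ideal.span {p ^ 2} := by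
  have hprime : (Ideal.span {p}).IsPrime := (Ideal.span_singleton_prime hp.ne_zero).mpr hp
  have hsq : Ideal.span {p ^ 2} ≤ Ideal.span {p} :=
    Ideal.span_singleton_le_span_singleton.mpr (dvd_pow_self p two_ne_zero)
  exact (hprime.mul_le.mp (hIJ.trans hsq)).imp (hI.le_span_sq_of_le_span hp hpq)
    (hJ.le_span_sq_of_le_span hp hpq)

end

namespace MvPolynomial

variable {R : Type*} [CommRing R]

noncomputable def shear (c : R) : MvPolynomial (Fin 2) R ≃ₐ[R] MvPolynomial (Fin 2) R :=
  AlgEquiv.ofAlgHom (aeval ![X 0 + C c * X 1, X 1]) (aeval ![X 0 - C c * X 1, X 1])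
    (algHom_ext fun i => by fin_cases i <;> simp)
    (algHom_ext fun i => by fin_cases i <;> simp)

theorem prime_X_zero_add_C_mul_X_one [IsDomain R] (c : R) :
    Prime (X 0 + C c * X 1 : MvPolynomial (Fin 2) R) := by
  have h := (MulEquiv.prime_iff (shear c).toMulEquiv).mpr (X_prime (R := R) (i := (0 : Fin 2)))
  simpa [shear] using h

theorem not_dvd_xyBracket_X_zero [NoZeroDivisors R] {c : R} (hc : c ≠ 0) :
    ¬ (X 0 + C c * X 1) ∣ xyBracket (X 0) (X 0 + C c * X 1 : MvPolynomial (Fin 2) R) := by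
  rintro ⟨t, ht⟩
  have h := congrArg (eval ![-c, 1]) ht
  simp [xyBracket, pderiv_X] at h
  exact hc h

end MvPolynomial

theorem xyBracket_poissonPrime_not_prime_general {k : Type*} [Field k]
    [CharP k 2] (c : k) (hc : c ≠ 0) :
    IsXYPoissonIdeal (Ideal.span {(X 0 : MvPolynomial (Fin 2) k) ^ 2 + C c ^ 2 * X 1 ^ 2}) ∧
    (Ideal.span {(X 0 : MvPolynomial (Fin 2) k) ^ 2 + C c ^ 2 * X 1 ^ 2} ≠ ⊤) ∧
    (∀ I J : Ideal (MvPolynomial (Fin 2) k), IsXYPoissonIdeal I → IsXYPoissonIdeal J →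
      I * J ≤ Ideal.span {(X 0 : MvPolynomial (Fin 2) k) ^ 2 + C c ^ 2 * X 1 ^ 2} →
      I ≤ Ideal.span {(X 0 : MvPolynomial (Fin 2) k) ^ 2 + C c ^ 2 * X 1 ^ 2} ∨
      J ≤ Ideal.span {(X 0 : MvPolynomial (Fin 2) k) ^ 2 + C c ^ 2 * X 1 ^ 2}) ∧
    ¬ (Ideal.span {(X 0 : MvPolynomial (Fin 2) k) ^ 2 + C c ^ 2 * X 1 ^ 2}).IsPrime := by
  set p : MvPolynomial (Fin 2) k := X 0 + C c * X 1
  have hsq : (X 0 : MvPolynomial (Fin 2) k) ^ 2 + C c ^ 2 * X 1 ^ 2 = p ^ 2 := by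
    rw [CharTwo.add_sq, mul_pow]
  have hp : Prime p := prime_X_zero_add_C_mul_X_one c
  rw [hsq]
  refine ⟨isXYPoissonIdeal_span_sq p, ?_, fun I J hI hJ =>
    hI.le_or_le_of_mul_le_span_sq hp (not_dvd_xyBracket_X_zero hc) hJ, ?_⟩
  · rw [Ne, Ideal.span_singleton_eq_top, isUnit_pow_iff two_ne_zero]
    exact hp.not_isUnit
  · rw [Ideal.span_singleton_prime (pow_ne_zero 2 hp.ne_zero)]
    exact not_prime_pow (by norm_num)

/-- Over an algebraically closed field of characteristic `2`, for every `c ≠ 0` the ideal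
`⟨x² + c²y²⟩` of `k[x,y]` (with the bracket `{x,y} = xy`) is a Poisson ideal which is
Poisson-prime but not prime. -/
theorem xyBracket_poissonPrime_not_prime {k : Type*} [Field k] [IsAlgClosed k]
    [CharP k 2] (c : k) (hc : c ≠ 0) :
    IsXYPoissonIdeal (Ideal.span {(X 0 : MvPolynomial (Fin 2) k) ^ 2 + C c ^ 2 * X 1 ^ 2}) ∧
    (Ideal.span {(X 0 : MvPolynomial (Fin 2) k) ^ 2 + C c ^ 2 * X 1 ^ 2} ≠ ⊤) ∧
    (∀ I J : Ideal (MvPolynomial (Fin 2) k), IsXYPoissonIdeal I → IsXYPoissonIdeal J →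
      I * J ≤ Ideal.span {(X 0 : MvPolynomial (Fin 2) k) ^ 2 + C c ^ 2 * X 1 ^ 2} →
      I ≤ Ideal.span {(X 0 : MvPolynomial (Fin 2) k) ^ 2 + C c ^ 2 * X 1 ^ 2} ∨
      J ≤ Ideal.span {(X 0 : MvPolynomial (Fin 2) k) ^ 2 + C c ^ 2 * X 1 ^ 2}) ∧
    ¬ (Ideal.span {(X 0 : MvPolynomial (Fin 2) k) ^ 2 + C c ^ 2 * X 1 ^ 2}).IsPrime :=
  xyBracket_poissonPrime_not_prime_general c hc
end

section
/- Let 𝒜 be a torsionfree algebra over the Laurent polynomial ring k[t^{±1}] such that 𝒜/(t−1)𝒜 is commutative. Then every additive commutator [a,b] = ab − ba in 𝒜 is uniquely divisible by t−1, and the bracket {ā, b̄} := image of (t−1)^{-1}[a,b] is a well-defined Poisson bracket on the commutative algebra 𝒜/(t−1)𝒜. -/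
/-!
Write `τ = t - 1`, a central non-zero-divisor of `𝒜` with `ker π = τ𝒜`. Since `A₁` is
commutative, `π` kills every commutator, so `⁅a, b⁆ = τ c` for a unique `c`. Replacing `a` by
`a + τu` and `b` by `b + τv` changes `c` by the commutator `⁅u, b⁆ + ⁅a + τu, v⁆`, which again
lies in `ker π`; hence `{π a, π b} = π c` is well defined. Each Poisson identity is the image of
the corresponding commutator identity in `𝒜` divided by `τ`; for the Jacobi identity the
double commutators are divided by `τ²`.
-/

open LaurentPolynomial

theorem LaurentPolynomial.T_one_sub_one_ne_zero {R : Type*} [Ring R] [Nontrivial R] :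
    (T 1 - 1 : R[T;T⁻¹]) ≠ 0 := by
  have h : (T 1 - 1 : R[T;T⁻¹]) = Polynomial.toLaurent (Polynomial.X - Polynomial.C 1) := by
    simp
  rw [h]
  exact (map_ne_zero_iff _ Polynomial.toLaurent_injective).mpr (Polynomial.X_sub_C_ne_zero 1)

theorem isLeftRegular_algebraMap_of_torsionfree {R A : Type*} [CommSemiring R] [Ring A]
    [Algebra R A] (htf : ∀ (p : R) (a : A), p ≠ 0 → p • a = 0 → a = 0) {p : R} (hp : p ≠ 0) :
    IsLeftRegular (algebraMap R A p) := fun x y hxy =>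
  sub_eq_zero.mp <| htf p _ hp <| by rw [Algebra.smul_def, mul_sub, sub_eq_zero]; exact hxy

section Commutator

attribute [local instance] LieRing.ofAssociativeRing

variable {A : Type*} [Ring A]

theorem Ring.lie_mul (a b c : A) : ⁅a, b * c⁆ = ⁅a, b⁆ * c + b * ⁅a, c⁆ := by
  simp only [Ring.lie_def]
  noncomm_ring

theorem Commute.mul_lie {τ b : A} (h : Commute τ b) (u : A) : ⁅τ * u, b⁆ = τ * ⁅u, b⁆ := by
  rw [Ring.lie_def, Ring.lie_def, mul_sub, ← mul_assoc b, ← h.eq, mul_assoc, mul_assoc]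

theorem Commute.lie_mul {τ a : A} (h : Commute τ a) (v : A) : ⁅a, τ * v⁆ = τ * ⁅a, v⁆ := by
  rw [← lie_skew, h.mul_lie, ← mul_neg, lie_skew]

theorem RingHom.map_lie_eq_zero {A₁ : Type*} [CommRing A₁] (π : A →+* A₁) (a b : A) :
    π ⁅a, b⁆ = 0 := by
  rw [Ring.lie_def, map_sub, map_mul, map_mul, mul_comm, sub_self]

end Commutator

structure IsSemiclassicalQuotient {A A₁ : Type*} [Ring A] [CommRing A₁]
    (τ : A) (π : A →+* A₁) : Prop where
  commute : ∀ a, Commute τ a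
  isLeftRegular : IsLeftRegular τ
  surjective : Function.Surjective π
  map_eq_zero_iff : ∀ x, π x = 0 ↔ ∃ c, x = τ * c

namespace IsSemiclassicalQuotient

attribute [local instance] LieRing.ofAssociativeRing

variable {A A₁ : Type*} [Ring A] [CommRing A₁] {τ : A} {π : A →+* A₁}

theorem exists_lie_eq_mul (h : IsSemiclassicalQuotient τ π) (a b : A) :
    ∃ c, ⁅a, b⁆ = τ * c :=
  (h.map_eq_zero_iff _).mp (π.map_lie_eq_zero a b)

noncomputable def dividedLie (h : IsSemiclassicalQuotient τ π) (a b : A) : A :=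
  (h.exists_lie_eq_mul a b).choose

theorem mul_dividedLie (h : IsSemiclassicalQuotient τ π) (a b : A) :
    τ * h.dividedLie a b = ⁅a, b⁆ :=
  (h.exists_lie_eq_mul a b).choose_spec.symm

theorem existsUnique_lie_eq_mul (h : IsSemiclassicalQuotient τ π) (a b : A) :
    ∃! c, ⁅a, b⁆ = τ * c :=
  ⟨h.dividedLie a b, (h.mul_dividedLie a b).symm,
    fun _ hc => h.isLeftRegular (hc.symm.trans (h.mul_dividedLie a b).symm)⟩

theorem map_eq_of_lie_eq_mul (h : IsSemiclassicalQuotient τ π) {a a' b b' c c' : A}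
    (ha : π a = π a') (hb : π b = π b') (hc : ⁅a, b⁆ = τ * c) (hc' : ⁅a', b'⁆ = τ * c') :
    π c = π c' := by
  obtain ⟨u, hu⟩ := (h.map_eq_zero_iff (a - a')).mp (by rw [map_sub, ha, sub_self])
  obtain ⟨v, hv⟩ := (h.map_eq_zero_iff (b - b')).mp (by rw [map_sub, hb, sub_self])
  have hdiff : c - c' = ⁅u, b⁆ + ⁅a', v⁆ := h.isLeftRegular <| by
    calc τ * (c - c') = ⁅a - a', b⁆ + ⁅a', b - b'⁆ := by
          rw [mul_sub, ← hc, ← hc', sub_lie, lie_sub]; abel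
      _ = τ * (⁅u, b⁆ + ⁅a', v⁆) := by
          rw [hu, hv, (h.commute b).mul_lie, (h.commute a').lie_mul, mul_add]
  rw [← sub_eq_zero, ← map_sub, hdiff, map_add, π.map_lie_eq_zero, π.map_lie_eq_zero, add_zero]

noncomputable def bracket (h : IsSemiclassicalQuotient τ π) (x y : A₁) : A₁ :=
  π (h.dividedLie (Function.surjInv h.surjective x) (Function.surjInv h.surjective y))

theorem bracket_map_of_lie_eq_mul (h : IsSemiclassicalQuotient τ π) {a b c : A}
    (hc : ⁅a, b⁆ = τ * c) : h.bracket (π a) (π b) = π c :=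
  h.map_eq_of_lie_eq_mul (Function.surjInv_eq _ _) (Function.surjInv_eq _ _)
    (h.mul_dividedLie _ _).symm hc

theorem bracket_map (h : IsSemiclassicalQuotient τ π) (a b : A) :
    h.bracket (π a) (π b) = π (h.dividedLie a b) :=
  h.bracket_map_of_lie_eq_mul (h.mul_dividedLie a b).symm

theorem add_bracket (h : IsSemiclassicalQuotient τ π) (x y z : A₁) :
    h.bracket (x + y) z = h.bracket x z + h.bracket y z := by
  obtain ⟨a, rfl⟩ := h.surjective x
  obtain ⟨b, rfl⟩ := h.surjective y
  obtain ⟨c, rfl⟩ := h.surjective z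
  rw [← map_add, h.bracket_map_of_lie_eq_mul (c := h.dividedLie a c + h.dividedLie b c),
    map_add, h.bracket_map, h.bracket_map]
  rw [add_lie, mul_add, h.mul_dividedLie, h.mul_dividedLie]

theorem bracket_add (h : IsSemiclassicalQuotient τ π) (x y z : A₁) :
    h.bracket x (y + z) = h.bracket x y + h.bracket x z := by
  obtain ⟨a, rfl⟩ := h.surjective x
  obtain ⟨b, rfl⟩ := h.surjective y
  obtain ⟨c, rfl⟩ := h.surjective z
  rw [← map_add, h.bracket_map_of_lie_eq_mul (c := h.dividedLie a b + h.dividedLie a c),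
    map_add, h.bracket_map, h.bracket_map]
  rw [lie_add, mul_add, h.mul_dividedLie, h.mul_dividedLie]

theorem bracket_eq_neg_bracket (h : IsSemiclassicalQuotient τ π) (x y : A₁) :
    h.bracket x y = -h.bracket y x := by
  obtain ⟨a, rfl⟩ := h.surjective x
  obtain ⟨b, rfl⟩ := h.surjective y
  rw [h.bracket_map_of_lie_eq_mul (c := -h.dividedLie b a), map_neg, h.bracket_map]
  rw [mul_neg, h.mul_dividedLie, lie_skew]

theorem dividedLie_jacobi (h : IsSemiclassicalQuotient τ π) (a b c : A) :
    h.dividedLie a (h.dividedLie b c) + h.dividedLie b (h.dividedLie c a)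
      + h.dividedLie c (h.dividedLie a b) = 0 := by
  have hdouble : ∀ a b c : A, τ * (τ * h.dividedLie a (h.dividedLie b c)) = ⁅a, ⁅b, c⁆⁆ :=
    fun a b c => by rw [h.mul_dividedLie, ← (h.commute a).lie_mul, h.mul_dividedLie]
  refine h.isLeftRegular (h.isLeftRegular ?_)
  simp only [mul_add, hdouble, lie_jacobi, mul_zero]

theorem bracket_jacobi (h : IsSemiclassicalQuotient τ π) (x y z : A₁) :
    h.bracket x (h.bracket y z) + h.bracket y (h.bracket z x)
      + h.bracket z (h.bracket x y) = 0 := by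
  obtain ⟨a, rfl⟩ := h.surjective x
  obtain ⟨b, rfl⟩ := h.surjective y
  obtain ⟨c, rfl⟩ := h.surjective z
  simp only [h.bracket_map, ← map_add, h.dividedLie_jacobi, map_zero]

theorem bracket_mul (h : IsSemiclassicalQuotient τ π) (x y z : A₁) :
    h.bracket x (y * z) = h.bracket x y * z + y * h.bracket x z := by
  obtain ⟨a, rfl⟩ := h.surjective x
  obtain ⟨b, rfl⟩ := h.surjective y
  obtain ⟨c, rfl⟩ := h.surjective z
  rw [← map_mul, h.bracket_map_of_lie_eq_mul (c := h.dividedLie a b * c + b * h.dividedLie a c),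
    map_add, map_mul, map_mul, h.bracket_map, h.bracket_map]
  rw [Ring.lie_mul, mul_add, ← mul_assoc, h.mul_dividedLie, ← mul_assoc, (h.commute b).eq,
    mul_assoc, h.mul_dividedLie]

end IsSemiclassicalQuotient

/-- Semiclassical limits: let `𝒜` be a torsionfree algebra over `k[t^{±1}]` whose quotient
`A₁ = 𝒜/(t-1)𝒜` (presented by a surjection `π` with kernel `(t-1)𝒜`) is commutative. Then
every commutator `ab - ba` in `𝒜` is uniquely divisible by `t - 1`, and
`{π a, π b} := π((t-1)⁻¹ [a,b])` is a well-defined Poisson bracket on `A₁`. -/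
theorem semiclassical_limit_poisson_bracket {k : Type*} [Field k] {A : Type*} [Ring A]
    [Algebra (LaurentPolynomial k) A]
    (htf : ∀ (p : LaurentPolynomial k) (a : A), p ≠ 0 → p • a = 0 → a = 0)
    {A₁ : Type*} [CommRing A₁] (π : A →+* A₁) (hsurj : Function.Surjective π)
    (hker : ∀ x : A, π x = 0 ↔
      ∃ c : A, x = algebraMap (LaurentPolynomial k) A (T 1 - 1) * c) :
    (∀ a b : A, ∃! c : A,
        a * b - b * a = algebraMap (LaurentPolynomial k) A (T 1 - 1) * c) ∧
    ∃ B : A₁ → A₁ → A₁,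
      (∀ a b c : A, a * b - b * a = algebraMap (LaurentPolynomial k) A (T 1 - 1) * c →
        B (π a) (π b) = π c) ∧
      (∀ x y z : A₁, B (x + y) z = B x z + B y z) ∧
      (∀ x y z : A₁, B x (y + z) = B x y + B x z) ∧
      (∀ x y : A₁, B x y = - B y x) ∧
      (∀ x y z : A₁, B x (B y z) + B y (B z x) + B z (B x y) = 0) ∧
      (∀ a x y : A₁, B a (x * y) = B a x * y + x * B a y) := by
  have h : IsSemiclassicalQuotient (algebraMap (LaurentPolynomial k) A (T 1 - 1)) π :=
    { commute := Algebra.commute_algebraMap_left _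
      isLeftRegular := isLeftRegular_algebraMap_of_torsionfree htf T_one_sub_one_ne_zero
      surjective := hsurj
      map_eq_zero_iff := hker }
  exact ⟨h.existsUnique_lie_eq_mul, h.bracket, fun _ _ _ => h.bracket_map_of_lie_eq_mul,
    h.add_bracket, h.bracket_add, h.bracket_eq_neg_bracket, h.bracket_jacobi, h.bracket_mul⟩
end

section
/- If q ∈ k× is not a root of unity, the quantum plane A = O_q(k^2) is a primitive ring; equivalently, the zero ideal of A is a (left) primitive ideal. -/
/-- The defining relation of the quantum plane: `x * y = q • (y * x)`. -/
inductive QPlaneRel (k : Type*) [CommRing k] (q : k) :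
    FreeAlgebra k (Fin 2) → FreeAlgebra k (Fin 2) → Prop
  | rel : QPlaneRel k q (FreeAlgebra.ι k (0 : Fin 2) * FreeAlgebra.ι k (1 : Fin 2))
      (algebraMap k _ q * (FreeAlgebra.ι k (1 : Fin 2) * FreeAlgebra.ι k (0 : Fin 2)))

/-- The quantum plane `O_q(k²) = k⟨x,y⟩/(xy - qyx)`. -/
abbrev QuantumPlane (k : Type*) [CommRing k] (q : k) := RingQuot (QPlaneRel k q)

/-- The generator `x` of the quantum plane. -/
noncomputable def qpX (k : Type*) [CommRing k] (q : k) : QuantumPlane k q :=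
  RingQuot.mkAlgHom k (QPlaneRel k q) (FreeAlgebra.ι k (0 : Fin 2))

/-- The generator `y` of the quantum plane. -/
noncomputable def qpY (k : Type*) [CommRing k] (q : k) : QuantumPlane k q :=
  RingQuot.mkAlgHom k (QPlaneRel k q) (FreeAlgebra.ι k (1 : Fin 2))

/-!
The quantum plane acts on `k[ℤ]`, with basis `e n = single n 1`, by
`x • e n = q ^ n • e (n - 1)` and `y • e n = e (n + 1)`. Then `y * x` acts diagonally with the
pairwise distinct eigenvalues `q ^ n`, so a polynomial in `y * x` projects any nonzero vector of a
submodule onto a multiple of some `e n`; shifting by `x` and `y` then yields every `e t`, so the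
module is simple.

For faithfulness, the ordered monomials `y ^ i * x ^ j` span the quantum plane, and they act
linearly independently: applied to `e t`, the monomials of a fixed degree `i - j` all land on the
same basis vector, with coefficients forming a polynomial in `q ^ t`; it vanishes at the infinitely
many points `q ^ t`, hence is zero.
-/

universe u

section Polynomial

open Polynomial

theorem aeval_apply_apply_of_diagonal {k ι : Type*} [CommRing k] (f : Module.End k (ι →₀ k))
    (μ : ι → k) (hf : ∀ m i, f m i = μ i * m i) (P : k[X]) (m : ι →₀ k) (i : ι) :
    aeval f P m i = P.eval (μ i) * m i := by
  induction P using Polynomial.induction_on generalizing m with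
  | C a => simp [Module.algebraMap_end_apply]
  | add P R hP hR => simp [hP, hR, add_mul]
  | monomial n a ih =>
    rw [pow_succ, ← mul_assoc, map_mul, Module.End.mul_apply, ih, aeval_X, hf, eval_mul_X]
    ring

theorem exists_aeval_apply_eq_single {k ι : Type*} [Field k] [DecidableEq ι]
    (f : Module.End k (ι →₀ k)) (μ : ι → k) (hf : ∀ m i, f m i = μ i * m i)
    (hμ : Function.Injective μ) {m : ι →₀ k} {t : ι} (ht : t ∈ m.support) :
    ∃ P : k[X], aeval f P m = Finsupp.single t 1 := by
  set P : k[X] := ∏ s ∈ m.support.erase t, (X - C (μ s))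
  have hPt : P.eval (μ t) ≠ 0 := by
    simp only [P, eval_prod, eval_sub, eval_X, eval_C]
    exact Finset.prod_ne_zero_iff.2 fun s hs =>
      sub_ne_zero.2 (hμ.ne (Finset.ne_of_mem_erase hs).symm)
  refine ⟨C (P.eval (μ t) * m t)⁻¹ * P, Finsupp.ext fun i => ?_⟩
  rw [aeval_apply_apply_of_diagonal f μ hf, eval_mul, eval_C, Finsupp.single_apply]
  by_cases hit : t = i
  · subst hit
    rw [if_pos rfl, mul_assoc, inv_mul_cancel₀ (mul_ne_zero hPt (Finsupp.mem_support_iff.1 ht))]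
  · rw [if_neg hit]
    by_cases hi : i ∈ m.support
    · have : P.eval (μ i) = 0 := by
        simp only [P, eval_prod, eval_sub, eval_X, eval_C]
        exact Finset.prod_eq_zero (Finset.mem_erase.2 ⟨Ne.symm hit, hi⟩) (sub_self _)
      rw [this, mul_zero, zero_mul]
    · rw [Finsupp.notMem_support_iff.1 hi, mul_zero]

theorem eq_zero_of_sum_mul_pow_pow_eq_zero {R ι : Type*} [CommRing R] [IsDomain R]
    {s : Finset ι} {e : ι → ℕ} (he : Set.InjOn e s) {r : R}
    (hr : Function.Injective fun n : ℕ => r ^ n) {b : ι → R}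
    (h : ∀ n : ℕ, ∑ i ∈ s, b i * (r ^ n) ^ e i = 0) : ∀ i ∈ s, b i = 0 := by
  classical
  set P : R[X] := ∑ i ∈ s, C (b i) * X ^ e i
  have hP : P = 0 := by
    refine P.eq_zero_of_infinite_isRoot (Set.Infinite.mono ?_
      (Set.infinite_range_of_injective hr))
    rintro _ ⟨n, rfl⟩
    simpa [P, eval_finsetSum] using h n
  intro i hi
  have := congr_arg (coeff · (e i)) hP
  simp only [P, finsetSum_coeff, coeff_C_mul_X_pow, coeff_zero] at this
  rwa [Finset.sum_eq_single_of_mem i hi fun j hj hji => if_neg (he.ne hi hj hji.symm),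
    if_pos rfl] at this

end Polynomial

theorem exists_faithful_isSimpleModule {k A : Type*} [CommRing k] [Ring A] [Algebra k A]
    {V : Type u} [AddCommGroup V] [Module k V] [Nontrivial V] (ρ : A →ₐ[k] Module.End k V)
    (hinj : Function.Injective ρ)
    (hirr : ∀ N : Submodule k V, (∀ a, ∀ m ∈ N, ρ a m ∈ N) → N ≠ ⊥ → N = ⊤) :
    ∃ (M : Type u) (_ : AddCommGroup M) (_ : Module A M),
      IsSimpleModule A M ∧ ∀ a : A, (∀ m : M, a • m = 0) → a = 0 := by
  let _ : Module A V := Module.compHom V ρ.toRingHom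
  have : IsScalarTower k A V := ⟨fun c a m => by
    change ρ (c • a) m = c • ρ a m
    rw [map_smul, LinearMap.smul_apply]⟩
  refine ⟨V, inferInstance, inferInstance, { eq_bot_or_eq_top := fun N => ?_ },
    fun a ha => hinj ?_⟩
  · rw [← Submodule.restrictScalars_eq_bot_iff k, ← Submodule.restrictScalars_eq_top_iff k]
    exact or_iff_not_imp_left.2 (hirr _ fun a m hm => N.smul_mem a hm)
  · exact LinearMap.ext fun m => (ha m).trans (by simp)

namespace QuantumPlane

section Monomials

variable {k : Type*} [CommRing k] (q : k)

theorem qpX_mul_qpY : qpX k q * qpY k q = q • (qpY k q * qpX k q) := by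
  rw [qpX, qpY, ← map_mul, ← map_mul, RingQuot.mkAlgHom_rel k QPlaneRel.rel, map_mul, map_mul,
    AlgHom.commutes, Algebra.smul_def]

theorem qpX_mul_qpY_pow (n : ℕ) : qpX k q * qpY k q ^ n = q ^ n • (qpY k q ^ n * qpX k q) := by
  induction n with
  | zero => simp
  | succ n ih =>
    rw [pow_succ, ← mul_assoc, ih, smul_mul_assoc, mul_assoc, qpX_mul_qpY, mul_smul_comm,
      smul_smul, ← pow_succ, ← mul_assoc, ← pow_succ]

noncomputable def monomial (p : ℕ × ℕ) : QuantumPlane k q := qpY k q ^ p.1 * qpX k q ^ p.2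

theorem qpY_mul_monomial (p : ℕ × ℕ) :
    qpY k q * monomial q p = monomial q (p.1 + 1, p.2) := by
  rw [monomial, monomial, ← mul_assoc, ← pow_succ']

theorem qpX_mul_monomial (p : ℕ × ℕ) :
    qpX k q * monomial q p = q ^ p.1 • monomial q (p.1, p.2 + 1) := by
  rw [monomial, monomial, ← mul_assoc, qpX_mul_qpY_pow, smul_mul_assoc, mul_assoc, ← pow_succ']

theorem mul_mem_span_monomial_of_mem (a : QuantumPlane k q) {v : QuantumPlane k q}
    (hv : v ∈ Submodule.span k (Set.range (monomial q))) :
    a * v ∈ Submodule.span k (Set.range (monomial q)) := by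
  set V := Submodule.span k (Set.range (monomial q))
  have hx : V ≤ V.comap (LinearMap.mulLeft k (qpX k q)) := Submodule.span_le.2 <| by
    rintro _ ⟨p, rfl⟩
    rw [SetLike.mem_coe, Submodule.mem_comap, LinearMap.mulLeft_apply, qpX_mul_monomial]
    exact V.smul_mem _ (Submodule.subset_span ⟨_, rfl⟩)
  have hy : V ≤ V.comap (LinearMap.mulLeft k (qpY k q)) := Submodule.span_le.2 <| by
    rintro _ ⟨p, rfl⟩
    rw [SetLike.mem_coe, Submodule.mem_comap, LinearMap.mulLeft_apply, qpY_mul_monomial]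
    exact Submodule.subset_span ⟨_, rfl⟩
  obtain ⟨b, rfl⟩ := RingQuot.mkAlgHom_surjective k (QPlaneRel k q) a
  induction b using FreeAlgebra.induction generalizing v with
  | grade0 r => rw [AlgHom.commutes, ← Algebra.smul_def]; exact V.smul_mem r hv
  | grade1 i =>
    fin_cases i
    · exact hx hv
    · exact hy hv
  | mul a b ha hb => rw [map_mul, mul_assoc]; exact ha (hb hv)
  | add a b ha hb => rw [map_add, add_mul]; exact V.add_mem (ha hv) (hb hv)

theorem mem_span_monomial (a : QuantumPlane k q) :
    a ∈ Submodule.span k (Set.range (monomial q)) := by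
  have h1 : (1 : QuantumPlane k q) ∈ Submodule.span k (Set.range (monomial q)) :=
    Submodule.subset_span ⟨(0, 0), by simp [monomial]⟩
  simpa using mul_mem_span_monomial_of_mem q a h1

end Monomials

section Representation

open Finsupp

variable {k : Type*} [Field k] (q : k)

noncomputable def xOp : Module.End k (ℤ →₀ k) := lsum k fun n => q ^ n • lsingle (n - 1)

noncomputable def yOp : Module.End k (ℤ →₀ k) := lmapDomain k k (· + 1)

theorem xOp_single (n : ℤ) (c : k) : xOp q (single n c) = q ^ n • single (n - 1) c := by
  rw [xOp, lsum_single, LinearMap.smul_apply, lsingle_apply]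

theorem yOp_single (n : ℤ) (c : k) : yOp (single n c) = single (n + 1) c := by
  rw [yOp, lmapDomain_apply, mapDomain_single]

theorem xOp_mul_yOp (hq0 : q ≠ 0) : xOp q * yOp = q • (yOp * xOp q) := by
  refine lhom_ext fun n c => ?_
  rw [Module.End.mul_apply, LinearMap.smul_apply, Module.End.mul_apply, yOp_single, xOp_single,
    xOp_single, map_smul, yOp_single, smul_smul, zpow_add_one₀ hq0, mul_comm,
    add_sub_cancel_right, sub_add_cancel]

noncomputable def rep (hq0 : q ≠ 0) : QuantumPlane k q →ₐ[k] Module.End k (ℤ →₀ k) :=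
  RingQuot.liftAlgHom k ⟨FreeAlgebra.lift k ![xOp q, yOp], by
    rintro _ _ ⟨⟩
    simp only [map_mul, FreeAlgebra.lift_ι_apply, Matrix.cons_val_zero, Matrix.cons_val_one,
      AlgHom.commutes]
    rw [xOp_mul_yOp q hq0, Algebra.smul_def]⟩

theorem rep_qpX (hq0 : q ≠ 0) : rep q hq0 (qpX k q) = xOp q := by
  simp [rep, qpX, RingQuot.liftAlgHom_mkAlgHom_apply]

theorem rep_qpY (hq0 : q ≠ 0) : rep q hq0 (qpY k q) = yOp := by
  simp [rep, qpY, RingQuot.liftAlgHom_mkAlgHom_apply]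

theorem yOp_xOp_apply (m : ℤ →₀ k) (t : ℤ) :
    (yOp * xOp q : Module.End k (ℤ →₀ k)) m t = q ^ t * m t := by
  induction m using induction_linear with
  | zero => simp
  | add f g hf hg => rw [map_add, Finsupp.add_apply, hf, hg, Finsupp.add_apply, mul_add]
  | single n c =>
    rw [Module.End.mul_apply, xOp_single, map_smul, yOp_single, sub_add_cancel,
      Finsupp.smul_apply, single_apply, smul_eq_mul]
    split_ifs with h <;> simp [h]

def xPowCoeff (j : ℕ) (t : ℤ) : k := ∏ m ∈ Finset.range j, q ^ (t - m)

theorem xPowCoeff_ne_zero (hq0 : q ≠ 0) (j : ℕ) (t : ℤ) : xPowCoeff q j t ≠ 0 :=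
  Finset.prod_ne_zero_iff.2 fun _ _ => zpow_ne_zero _ hq0

theorem xPowCoeff_eq (hq0 : q ≠ 0) (j : ℕ) (t : ℤ) :
    xPowCoeff q j t = xPowCoeff q j 0 * (q ^ t) ^ j := by
  simp only [xPowCoeff, zpow_sub₀ hq0, zero_sub, zpow_neg, div_eq_mul_inv,
    Finset.prod_mul_distrib, Finset.prod_const, Finset.card_range]
  ring

theorem xOp_pow_single (j : ℕ) (t : ℤ) (c : k) :
    (xOp q ^ j) (single t c) = xPowCoeff q j t • single (t - j) c := by
  induction j generalizing t with
  | zero => simp [xPowCoeff]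
  | succ j ih =>
    rw [pow_succ, Module.End.mul_apply, xOp_single, map_smul, ih, smul_smul, xPowCoeff,
      xPowCoeff, Finset.prod_range_succ', mul_comm]
    push_cast
    simp_rw [sub_sub, add_comm (1 : ℤ), sub_zero]

theorem yOp_pow_single (i : ℕ) (t : ℤ) (c : k) : (yOp ^ i) (single t c) = single (t + i) c := by
  induction i generalizing t with
  | zero => simp
  | succ i ih =>
    rw [pow_succ, Module.End.mul_apply, yOp_single, ih, Nat.cast_succ, add_assoc, add_comm 1]

theorem eq_top_of_single_mem (hq0 : q ≠ 0) {N : Submodule k (ℤ →₀ k)}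
    (hx : ∀ m ∈ N, xOp q m ∈ N) (hy : ∀ m ∈ N, yOp m ∈ N) {n : ℤ}
    (hn : single n 1 ∈ N) :
    N = ⊤ := by
  have hall (t : ℤ) : single t 1 ∈ N := by
    induction t using Int.inductionOn' (b := n) with
    | zero => exact hn
    | succ t _ ht => simpa [yOp_single] using hy _ ht
    | pred t _ ht =>
      have := N.smul_mem (q ^ t)⁻¹ (hx _ ht)
      rwa [xOp_single, smul_smul, inv_mul_cancel₀ (zpow_ne_zero t hq0), one_smul] at this
  rw [eq_top_iff, ← (Finsupp.basisSingleOne (R := k) (ι := ℤ)).span_eq, Submodule.span_le]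
  rintro _ ⟨t, rfl⟩
  simpa using hall t

theorem rep_irreducible (hq0 : q ≠ 0) (hq : Function.Injective fun n : ℤ => q ^ n)
    (N : Submodule k (ℤ →₀ k)) (hN : ∀ a, ∀ m ∈ N, rep q hq0 a m ∈ N)
    (hN0 : N ≠ ⊥) :
    N = ⊤ := by
  obtain ⟨m, hm, hm0⟩ := Submodule.exists_mem_ne_zero_of_ne_bot hN0
  obtain ⟨t, ht⟩ := support_nonempty_iff.2 hm0
  obtain ⟨P, hP⟩ := exists_aeval_apply_eq_single _ _ (yOp_xOp_apply q) hq ht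
  refine eq_top_of_single_mem q hq0 (rep_qpX q hq0 ▸ hN _) (rep_qpY q hq0 ▸ hN _) (n := t) ?_
  have := hN (Polynomial.aeval (qpY k q * qpX k q) P) m hm
  rwa [← Polynomial.aeval_algHom_apply, map_mul, rep_qpX, rep_qpY, hP] at this

end Representation

section Faithful

open Finsupp

variable {k : Type*} [Field k] (q : k)

theorem yOp_pow_mul_xOp_pow_single (p : ℕ × ℕ) (t : ℤ) :
    (yOp ^ p.1 * xOp q ^ p.2 : Module.End k (ℤ →₀ k)) (single t 1) =
      xPowCoeff q p.2 t • single (t - p.2 + p.1) 1 := by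
  rw [Module.End.mul_apply, xOp_pow_single, map_smul, yOp_pow_single]

theorem linearIndependent_yOp_pow_mul_xOp_pow (hq0 : q ≠ 0)
    (hq : Function.Injective fun n : ℕ => q ^ n) :
    LinearIndependent k
      fun p : ℕ × ℕ => (yOp ^ p.1 * xOp q ^ p.2 : Module.End k (ℤ →₀ k)) := by
  classical
  refine linearIndependent_iff'ₛ.2 fun s g₁ g₂ hg p₀ hp₀ => sub_eq_zero.1 ?_
  set S := s.filter fun p : ℕ × ℕ => (p.1 : ℤ) - p.2 = p₀.1 - p₀.2
  have hS (n : ℕ) : ∑ p ∈ S, (g₁ p - g₂ p) * xPowCoeff q p.2 0 * (q ^ n) ^ p.2 = 0 := by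
    have h := congr($hg (single (n : ℤ) 1) (n + (p₀.1 - p₀.2)))
    simp only [LinearMap.sum_apply, LinearMap.smul_apply, yOp_pow_mul_xOp_pow_single,
      finsetSum_apply, Finsupp.smul_apply, single_apply, smul_eq_mul] at h
    rw [← sub_eq_zero, ← Finset.sum_sub_distrib] at h
    rw [Finset.sum_filter]
    refine (Finset.sum_congr rfl fun p _ => ?_).trans h
    rw [xPowCoeff_eq q hq0 _ n, zpow_natCast]
    split_ifs <;> first | omega | ring
  have hS_inj : Set.InjOn Prod.snd (S : Set (ℕ × ℕ)) := fun p hp p' hp' h => by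
    simp only [S, Finset.coe_filter, Set.mem_ofPred_eq] at hp hp'
    ext <;> omega
  have h₀ :=
    eq_zero_of_sum_mul_pow_pow_eq_zero hS_inj hq hS p₀ (Finset.mem_filter.2 ⟨hp₀, rfl⟩)
  exact (mul_eq_zero.1 h₀).resolve_right (xPowCoeff_ne_zero q hq0 _ _)

theorem rep_injective (hq0 : q ≠ 0) (hq : Function.Injective fun n : ℕ => q ^ n) :
    Function.Injective (rep q hq0) := by
  refine (injective_iff_map_eq_zero _).2 fun a ha => ?_
  obtain ⟨c, rfl⟩ := mem_span_range_iff_exists_finsupp.1 (mem_span_monomial q a)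
  have hc : c = 0 := by
    refine linearIndependent_yOp_pow_mul_xOp_pow q hq0 hq ?_
    rw [map_zero, linearCombination_apply, ← ha]
    simp [Finsupp.sum, monomial, rep_qpX, rep_qpY]
  simp [hc]

end Faithful

end QuantumPlane

theorem quantumPlane_primitive_general {k : Type u} [Field k] (q : k)
    (hq0 : q ≠ 0) (hq : ∀ n : ℕ, 0 < n → q ^ n ≠ 1) :
    ∃ (M : Type u) (_ : AddCommGroup M) (_ : Module (QuantumPlane k q) M),
      IsSimpleModule (QuantumPlane k q) M ∧
      ∀ a : QuantumPlane k q, (∀ m : M, a • m = 0) → a = 0 := by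
  have hqℤ : Function.Injective fun n : ℤ => q ^ n := by
    have hfin : ¬IsOfFinOrder (Units.mk0 q hq0) := by
      rw [← Units.isOfFinOrder_val, isOfFinOrder_iff_pow_eq_one]
      simpa using hq
    exact fun a b h => injective_zpow_iff_not_isOfFinOrder.2 hfin (Units.ext (by simpa using h))
  have hqℕ : Function.Injective fun n : ℕ => q ^ n := fun a b h =>
    Nat.cast_injective (hqℤ (by simpa using h))
  exact exists_faithful_isSimpleModule (QuantumPlane.rep q hq0)
    (QuantumPlane.rep_injective q hq0 hqℕ) (QuantumPlane.rep_irreducible q hq0 hqℤ)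

/-- If `q` is not a root of unity (over an algebraically closed field), the quantum plane
is a left primitive ring: it has a faithful simple left module, i.e. the zero ideal is the
annihilator of a simple left module. -/
theorem quantumPlane_primitive {k : Type u} [Field k] [IsAlgClosed k] (q : k)
    (hq0 : q ≠ 0) (hq : ∀ n : ℕ, 0 < n → q ^ n ≠ 1) :
    ∃ (M : Type u) (_ : AddCommGroup M) (_ : Module (QuantumPlane k q) M),
      IsSimpleModule (QuantumPlane k q) M ∧
      ∀ a : QuantumPlane k q, (∀ m : M, a • m = 0) → a = 0 :=
  quantumPlane_primitive_general q hq0 hq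
end
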